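/- Let r ≥ 2 and let H_1 and H_2 be vertex-disjoint r-uniform supertrees with distinguished vertices v_1 ∈ V(H_1) and v_2 ∈ V(H_2). Let T be the supertree obtained from the disjoint union H_1 ∪ H_2 by adding one new edge e consisting of v_1, v_2 and r−2 new vertices, and let T' be the hypergraph obtained from H_1 ∪ H_2 by identifying v_1 and v_2 into a single vertex w (the coalescence H_1·H_2) and then adding a pendant edge consisting of w and r−1 new vertices. Then φ(T, x) − φ(T', x) = x^{r−2} · ( x·φ(H_2 − v_2, x) − φ(H_2, x) ) · Σ_{e_i ∈ E_{v_1}(H_1)} φ(H_1 − V(e_i), x), where the sum runs over all edges e_i of H_1 containing v_1. -/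

import Mathlib

open Classical

noncomputable section

/-- A finite hypergraph: a finite vertex set together with a finite set of edges,
each edge being a finite set of vertices. -/
structure FinHypergraph (α : Type*) where
  verts : Finset α
  edges : Finset (Finset α)

namespace FinHypergraph

variable {α : Type*}

/-- Every edge of `H` is a subset of the vertex set of `H`. -/
def WellFormed (H : FinHypergraph α) : Prop := ∀ e ∈ H.edges, e ⊆ H.verts

/-- `H` is `r`-uniform: every edge has exactly `r` vertices. -/
def Uniform (H : FinHypergraph α) (r : ℕ) : Prop := ∀ e ∈ H.edges, e.card = r

/-- A set of edges is a matching if its members are pairwise disjoint. -/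
def IsMatchingSet (M : Finset (Finset α)) : Prop :=
  ∀ e ∈ M, ∀ f ∈ M, e ≠ f → Disjoint e f

/-- `m(H,k)`: the number of matchings of `H` consisting of exactly `k` edges. -/
noncomputable def matchCount (H : FinHypergraph α) (k : ℕ) : ℕ :=
  (H.edges.powerset.filter (fun M => M.card = k ∧ IsMatchingSet M)).card

/-- The matching polynomial `φ(H,x) = Σ_k (-1)^k m(H,k) x^(n - r·k)` of an
`r`-uniform hypergraph `H` with `n` vertices, evaluated at a real number `x`. -/
noncomputable def matchPoly (H : FinHypergraph α) (r : ℕ) (x : ℝ) : ℝ :=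
  ∑ k ∈ Finset.range (H.verts.card + 1),
    (-1 : ℝ) ^ k * (H.matchCount k : ℝ) * x ^ (H.verts.card - r * k)

/-- `H − S`: delete the vertices of `S` and all edges meeting `S`. -/
def removeVerts (H : FinHypergraph α) (S : Finset α) : FinHypergraph α :=
  ⟨H.verts \ S, H.edges.filter (fun e => Disjoint e S)⟩

/-- `H` is connected: nonempty vertex set, and any two vertices are linked by a chain of
vertices successively lying in a common edge. -/
def Connected (H : FinHypergraph α) : Prop :=
  H.verts.Nonempty ∧ ∀ u ∈ H.verts, ∀ v ∈ H.verts,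
    Relation.ReflTransGen (fun a b => ∃ e ∈ H.edges, a ∈ e ∧ b ∈ e) u v

/-- `H` has a cycle: an alternating sequence `v_0 e_0 v_1 e_1 … v_{ℓ-1} e_{ℓ-1} v_0`
(with `ℓ ≥ 2`) of distinct vertices and distinct edges such that consecutive vertices lie
in the intermediate edge. -/
def HasCycle (H : FinHypergraph α) : Prop :=
  ∃ (ℓ : ℕ) (v : ℕ → α) (e : ℕ → Finset α), 2 ≤ ℓ ∧
    Set.InjOn v (Set.Iio ℓ) ∧ Set.InjOn e (Set.Iio ℓ) ∧
    ∀ i < ℓ, e i ∈ H.edges ∧ v i ∈ e i ∧ v ((i + 1) % ℓ) ∈ e i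

/-- An `r`-uniform supertree: a connected acyclic `r`-uniform hypergraph. -/
def IsSupertree (H : FinHypergraph α) (r : ℕ) : Prop :=
  H.WellFormed ∧ H.Uniform r ∧ H.Connected ∧ ¬ H.HasCycle

end FinHypergraph

open FinHypergraph

/-!
Deleting the new edge of `T`, and the pendant edge of `T'`, gives
`φ(T) = x^(r-2) φ(H₁) φ(H₂) - φ(H₁-v₁) φ(H₂-v₂)` and
`φ(T') = x^(r-1) φ(H₁·H₂) - φ(H₁-v₁) φ(H₂-v₂)`.
The coalescence is a union of `H₁` with a relabelled copy of `H₂` meeting it only in `v₁`, and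
expanding along that vertex gives
`φ(H₁·H₂) = φ(H₁-v₁) φ(H₂) + φ(H₁) φ(H₂-v₂) - x φ(H₁-v₁) φ(H₂-v₂)`.
Hence `φ(T) - φ(T') = x^(r-2) (φ(H₁) - x φ(H₁-v₁)) (φ(H₂) - x φ(H₂-v₂))`, and the
vertex recurrence `φ(H) = x φ(H-v) - Σ_{e ∋ v} φ(H-V(e))` at `v₁` rewrites the first factor.
-/

namespace Finset

variable {α β : Type*}

theorem disjoint_image_iff_of_injOn {f : α → β} {s t : Finset α}
    (hf : Set.InjOn f ↑(s ∪ t)) : Disjoint (s.image f) (t.image f) ↔ Disjoint s t := by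
  rw [Finset.disjoint_iff_inter_eq_empty, Finset.disjoint_iff_inter_eq_empty,
    ← Finset.image_inter_of_injOn _ _ (by rwa [← Finset.coe_union]), Finset.image_eq_empty]

theorem image_update_id (v2 v1 : α) (e : Finset α) :
    e.image (Function.update id v2 v1) = if v2 ∈ e then insert v1 (e.erase v2) else e := by
  ext a
  split_ifs with h <;> simp [Function.update_apply] <;> grind

end Finset

namespace FinHypergraph

variable {α β : Type*}

@[ext] theorem ext {H K : FinHypergraph α} (hv : H.verts = K.verts) (he : H.edges = K.edges) :
    H = K := by
  cases H; cases K; simp_all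

instance : Union (FinHypergraph α) :=
  ⟨fun H K => ⟨H.verts ∪ K.verts, H.edges ∪ K.edges⟩⟩

@[simp] theorem union_verts (H K : FinHypergraph α) : (H ∪ K).verts = H.verts ∪ K.verts := rfl

@[simp] theorem union_edges (H K : FinHypergraph α) : (H ∪ K).edges = H.edges ∪ K.edges := rfl

@[simp] theorem removeVerts_verts (H : FinHypergraph α) (S : Finset α) :
    (H.removeVerts S).verts = H.verts \ S := rfl

@[simp] theorem removeVerts_edges (H : FinHypergraph α) (S : Finset α) :
    (H.removeVerts S).edges = H.edges.filter (Disjoint · S) := rfl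

theorem union_comm (H K : FinHypergraph α) : H ∪ K = K ∪ H :=
  ext (Finset.union_comm _ _) (Finset.union_comm _ _)

theorem removeVerts_union (H K : FinHypergraph α) (S : Finset α) :
    (H ∪ K).removeVerts S = H.removeVerts S ∪ K.removeVerts S :=
  ext (Finset.union_sdiff_distrib _ _ _) (Finset.filter_union _ _ _)

theorem removeVerts_congr {H : FinHypergraph α} (hH : H.WellFormed) {S S' : Finset α}
    (h : ∀ a ∈ H.verts, a ∈ S ↔ a ∈ S') : H.removeVerts S = H.removeVerts S' := by
  ext1
  · ext a
    simp only [removeVerts_verts, Finset.mem_sdiff]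
    exact and_congr_right fun ha => not_congr (h a ha)
  · refine Finset.filter_congr fun e he => ?_
    simp only [Finset.disjoint_left]
    exact forall₂_congr fun a ha => not_congr (h a (hH e he ha))

theorem WellFormed.union {H K : FinHypergraph α} (hH : H.WellFormed) (hK : K.WellFormed) :
    (H ∪ K).WellFormed := by
  intro e he
  rcases Finset.mem_union.1 he with he | he
  · exact (hH e he).trans Finset.subset_union_left
  · exact (hK e he).trans Finset.subset_union_right

theorem Uniform.union {H K : FinHypergraph α} {r : ℕ} (hH : H.Uniform r) (hK : K.Uniform r) :
    (H ∪ K).Uniform r := by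
  intro e he
  rcases Finset.mem_union.1 he with he | he
  exacts [hH e he, hK e he]

theorem WellFormed.removeVerts {H : FinHypergraph α} (hH : H.WellFormed) (S : Finset α) :
    (H.removeVerts S).WellFormed := by
  intro e he
  rw [removeVerts_edges, Finset.mem_filter] at he
  exact Finset.subset_sdiff.2 ⟨hH e he.1, he.2⟩

theorem Uniform.removeVerts {H : FinHypergraph α} {r : ℕ} (hH : H.Uniform r) (S : Finset α) :
    (H.removeVerts S).Uniform r :=
  fun e he => hH e (Finset.mem_filter.1 he).1

theorem disjoint_edges_of_disjoint_verts {H K : FinHypergraph α} {r : ℕ} (hr : 0 < r)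
    (hH : H.WellFormed) (hu : H.Uniform r) (hK : K.WellFormed) (hVK : Disjoint H.verts K.verts) :
    Disjoint H.edges K.edges := by
  refine Finset.disjoint_left.2 fun e heH heK => ?_
  obtain ⟨a, ha⟩ := Finset.card_pos.1 (hu e heH ▸ hr)
  exact Finset.disjoint_left.1 hVK (hH e heH ha) (hK e heK ha)

def matchings (H : FinHypergraph α) : Finset (Finset (Finset α)) :=
  H.edges.powerset.filter IsMatchingSet

theorem mem_matchings {H : FinHypergraph α} {M : Finset (Finset α)} :
    M ∈ H.matchings ↔ M ⊆ H.edges ∧ (M : Set (Finset α)).Pairwise Disjoint := by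
  rw [matchings, Finset.mem_filter, Finset.mem_powerset]
  rfl

theorem mem_matchings_of_subset {H K : FinHypergraph α} {M N : Finset (Finset α)}
    (hM : M ∈ H.matchings) (hNM : N ⊆ M) (hNK : N ⊆ K.edges) : N ∈ K.matchings :=
  mem_matchings.2 ⟨hNK, (mem_matchings.1 hM).2.mono (Finset.coe_subset.2 hNM)⟩

theorem mul_card_le_card_verts {H : FinHypergraph α} {r : ℕ} (hH : H.WellFormed)
    (hu : H.Uniform r) {M : Finset (Finset α)} (hM : M ∈ H.matchings) :
    r * M.card ≤ H.verts.card := by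
  obtain ⟨hsub, hdisj⟩ := mem_matchings.1 hM
  calc r * M.card = ∑ e ∈ M, e.card := by
        rw [Finset.sum_const_nat fun e he => hu e (hsub he), mul_comm]
    _ = (M.biUnion id).card := (Finset.card_biUnion hdisj).symm
    _ ≤ H.verts.card := Finset.card_le_card (Finset.biUnion_subset.2 fun e he => hH e (hsub he))

theorem matchPoly_eq_sum_matchings {H : FinHypergraph α} {r : ℕ} (hr : 0 < r)
    (hH : H.WellFormed) (hu : H.Uniform r) (x : ℝ) :
    H.matchPoly r x =
      ∑ M ∈ H.matchings, (-1 : ℝ) ^ M.card * x ^ (H.verts.card - r * M.card) := by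
  have hcard : ∀ M ∈ H.matchings, M.card ∈ Finset.range (H.verts.card + 1) := fun M hM =>
    Finset.mem_range_succ_iff.2
      ((Nat.le_mul_of_pos_left _ hr).trans (mul_card_le_card_verts hH hu hM))
  rw [matchPoly, ← Finset.sum_fiberwise_of_maps_to hcard]
  refine Finset.sum_congr rfl fun k _ => ?_
  rw [Finset.sum_congr rfl fun M hM => by rw [(Finset.mem_filter.1 hM).2], Finset.sum_const,
    nsmul_eq_mul, matchCount, matchings, Finset.filter_filter]
  simp only [and_comm]
  ring

theorem matchPoly_edgeless (N : Finset α) (r : ℕ) (x : ℝ) :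
    (⟨N, ∅⟩ : FinHypergraph α).matchPoly r x = x ^ N.card := by
  rw [matchPoly, Finset.sum_range_succ']
  simp only [matchCount, Finset.powerset_empty, Finset.filter_singleton]
  simp [IsMatchingSet]

theorem matchPoly_union_of_disjoint {H K : FinHypergraph α} {r : ℕ} (hr : 0 < r)
    (hH : H.WellFormed) (huH : H.Uniform r) (hK : K.WellFormed) (huK : K.Uniform r)
    (hVK : Disjoint H.verts K.verts) (x : ℝ) :
    (H ∪ K).matchPoly r x = H.matchPoly r x * K.matchPoly r x := by
  have hEK := disjoint_edges_of_disjoint_verts hr hH huH hK hVK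
  rw [matchPoly_eq_sum_matchings hr (hH.union hK) (huH.union huK),
    matchPoly_eq_sum_matchings hr hH huH, matchPoly_eq_sum_matchings hr hK huK,
    Finset.sum_mul_sum, ← Finset.sum_product', eq_comm]
  refine Finset.sum_bij' (fun p _ => p.1 ∪ p.2)
    (fun M _ => (M.filter (· ∈ H.edges), M.filter (· ∈ K.edges))) ?_ ?_ ?_ ?_ ?_
  · rintro ⟨M, N⟩ hMN
    obtain ⟨⟨hMH, hM⟩, hNK, hN⟩ := by
      simpa only [Finset.mem_product, mem_matchings] using hMN
    refine mem_matchings.2 ⟨Finset.union_subset_union hMH hNK, ?_⟩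
    rw [Finset.coe_union, Set.pairwise_union_of_symm]
    exact ⟨hM, hN, fun e he d hd _ => hVK.mono (hH e (hMH he)) (hK d (hNK hd))⟩
  · intro M hM
    have hsub : ∀ E : Finset (Finset α), M.filter (· ∈ E) ⊆ E := fun E e he =>
      (Finset.mem_filter.1 he).2
    exact Finset.mem_product.2 ⟨mem_matchings_of_subset hM (Finset.filter_subset _ _) (hsub _),
      mem_matchings_of_subset hM (Finset.filter_subset _ _) (hsub _)⟩
  · rintro ⟨M, N⟩ hMN
    obtain ⟨⟨hMH, -⟩, hNK, -⟩ := by simpa only [Finset.mem_product, mem_matchings] using hMN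
    simp only [Finset.filter_union, Prod.mk.injEq]
    constructor
    · rw [Finset.filter_true_of_mem fun e he => hMH he,
        Finset.filter_false_of_mem fun e he => Finset.disjoint_right.1 hEK (hNK he),
        Finset.union_empty]
    · rw [Finset.filter_false_of_mem fun e he => Finset.disjoint_left.1 hEK (hMH he),
        Finset.filter_true_of_mem fun e he => hNK he, Finset.empty_union]
  · intro M hM
    rw [← Finset.filter_or, Finset.filter_true_of_mem fun e he =>
      Finset.mem_union.1 ((mem_matchings.1 hM).1 he)]
  · rintro ⟨M, N⟩ hMN
    obtain ⟨hM, hN⟩ : M ∈ H.matchings ∧ N ∈ K.matchings := Finset.mem_product.1 hMN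
    have hMN : Disjoint M N :=
      hEK.mono (mem_matchings.1 hM).1 (mem_matchings.1 hN).1
    have := mul_card_le_card_verts hH huH hM
    have := mul_card_le_card_verts hK huK hN
    rw [union_verts, Finset.card_union_of_disjoint hVK, Finset.card_union_of_disjoint hMN,
      show H.verts.card + K.verts.card - r * (M.card + N.card)
        = (H.verts.card - r * M.card) + (K.verts.card - r * N.card) by rw [mul_add]; omega]
    ring

theorem sum_matchings_filter_mem {H : FinHypergraph α} {r : ℕ} (hr : 0 < r)
    (hH : H.WellFormed) (hu : H.Uniform r) {e : Finset α} (he : e ∈ H.edges) (x : ℝ) :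
    ∑ M ∈ H.matchings with e ∈ M, (-1 : ℝ) ^ M.card * x ^ (H.verts.card - r * M.card)
      = -(H.removeVerts e).matchPoly r x := by
  have he_ne : e.Nonempty := Finset.card_pos.1 (hu e he ▸ hr)
  have herase : ∀ M ∈ H.matchings.filter (e ∈ ·),
      M.erase e ∈ (H.removeVerts e).matchings := by
    intro M hM
    obtain ⟨hM, heM⟩ := Finset.mem_filter.1 hM
    refine mem_matchings_of_subset hM (Finset.erase_subset _ _) fun d hd => ?_
    obtain ⟨hde, hdM⟩ := Finset.mem_erase.1 hd
    obtain ⟨hME, hM⟩ := mem_matchings.1 hM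
    exact Finset.mem_filter.2 ⟨hME hdM, hM hdM heM hde⟩
  rw [matchPoly_eq_sum_matchings hr (hH.removeVerts e) (hu.removeVerts e),
    ← Finset.sum_neg_distrib]
  refine Finset.sum_nbij' (fun M => M.erase e) (insert e) herase ?_ ?_ ?_ ?_
  · intro M hM
    obtain ⟨hME, hM⟩ := mem_matchings.1 hM
    refine Finset.mem_filter.2 ⟨mem_matchings.2 ⟨Finset.insert_subset he fun d hd =>
      (Finset.mem_filter.1 (hME hd)).1, ?_⟩, Finset.mem_insert_self _ _⟩
    rw [Finset.coe_insert, Set.pairwise_insert_of_symm]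
    exact ⟨hM, fun d hd _ => (Finset.mem_filter.1 (hME hd)).2.symm⟩
  · intro M hM
    exact Finset.insert_erase (Finset.mem_filter.1 hM).2
  · intro M hM
    refine Finset.erase_insert fun heM => he_ne.ne_empty ?_
    exact disjoint_self.1 (Finset.mem_filter.1 ((mem_matchings.1 hM).1 heM)).2
  · intro M hM
    have hb := mul_card_le_card_verts (hH.removeVerts e) (hu.removeVerts e) (herase M hM)
    rw [removeVerts_verts, Finset.card_sdiff_of_subset (hH e he), hu e he] at hb ⊢
    rw [← Finset.card_erase_add_one (Finset.mem_filter.1 hM).2,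
      show H.verts.card - r * ((M.erase e).card + 1) = H.verts.card - r - r * (M.erase e).card by
        rw [mul_add_one]; omega]
    ring

theorem matchPoly_insert_edge {H : FinHypergraph α} {r : ℕ} (hr : 0 < r) (hH : H.WellFormed)
    (hu : H.Uniform r) {e : Finset α} (heV : e ⊆ H.verts) (hcard : e.card = r)
    (heE : e ∉ H.edges) (x : ℝ) :
    (⟨H.verts, insert e H.edges⟩ : FinHypergraph α).matchPoly r x
      = H.matchPoly r x - (H.removeVerts e).matchPoly r x := by
  set H' : FinHypergraph α := ⟨H.verts, insert e H.edges⟩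
  have hH' : H'.WellFormed := fun d hd => (Finset.mem_insert.1 hd).elim (· ▸ heV) (hH d)
  have hu' : H'.Uniform r := fun d hd => (Finset.mem_insert.1 hd).elim (· ▸ hcard) (hu d)
  have hee : ¬Disjoint e e := by
    rw [disjoint_self]
    exact (Finset.card_pos.1 (hcard ▸ hr)).ne_empty
  have hdel : H'.removeVerts e = H.removeVerts e :=
    ext rfl (by simp only [H', removeVerts_edges, Finset.filter_insert, if_neg hee])
  have hkeep : H'.matchings.filter (e ∉ ·) = H.matchings := by
    ext M
    simp only [Finset.mem_filter, mem_matchings, H']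
    constructor
    · rintro ⟨⟨hME, hM⟩, heM⟩
      exact ⟨(Finset.subset_insert_iff_of_notMem heM).1 hME, hM⟩
    · rintro ⟨hME, hM⟩
      exact ⟨⟨hME.trans (Finset.subset_insert _ _), hM⟩, fun heM => heE (hME heM)⟩
  rw [matchPoly_eq_sum_matchings hr hH' hu', ← Finset.sum_filter_add_sum_filter_not _ (e ∈ ·),
    sum_matchings_filter_mem hr hH' hu' (Finset.mem_insert_self _ _), hdel, hkeep,
    ← matchPoly_eq_sum_matchings hr hH hu]
  ring

theorem matchings_removeVerts_singleton (H : FinHypergraph α) (v : α) :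
    (H.removeVerts {v}).matchings = H.matchings.filter (fun M => ¬∃ e ∈ M, v ∈ e) := by
  ext M
  simp only [Finset.mem_filter, mem_matchings, removeVerts_edges, Finset.disjoint_singleton_right,
    not_exists, not_and]
  constructor
  · rintro ⟨hME, hM⟩
    exact ⟨⟨fun e he => (Finset.mem_filter.1 (hME he)).1, hM⟩,
      fun e he => (Finset.mem_filter.1 (hME he)).2⟩
  · rintro ⟨⟨hME, hM⟩, hvM⟩
    exact ⟨fun e he => Finset.mem_filter.2 ⟨hME he, hvM e he⟩, hM⟩

theorem matchPoly_vertex_recurrence {H : FinHypergraph α} {r : ℕ} (hr : 0 < r)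
    (hH : H.WellFormed) (hu : H.Uniform r) {v : α} (hv : v ∈ H.verts) (x : ℝ) :
    H.matchPoly r x = x * (H.removeVerts {v}).matchPoly r x
      - ∑ e ∈ H.edges with v ∈ e, (H.removeVerts e).matchPoly r x := by
  have hcover : H.matchings.filter (fun M => ∃ e ∈ M, v ∈ e)
      = (H.edges.filter (v ∈ ·)).biUnion (fun e => H.matchings.filter (e ∈ ·)) := by
    ext M
    simp only [Finset.mem_filter, Finset.mem_biUnion, mem_matchings]
    constructor
    · rintro ⟨hM, e, heM, hve⟩
      exact ⟨e, ⟨hM.1 heM, hve⟩, hM, heM⟩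
    · rintro ⟨e, ⟨-, hve⟩, hM, heM⟩
      exact ⟨hM, e, heM, hve⟩
  have hcover_disj : (H.edges.filter (v ∈ ·) : Set (Finset α)).PairwiseDisjoint
      (fun e => H.matchings.filter (e ∈ ·)) := by
    intro e he d hd hed
    refine Finset.disjoint_left.2 fun M heM hdM => ?_
    obtain ⟨hM, heM⟩ := Finset.mem_filter.1 heM
    have hdisj := (mem_matchings.1 hM).2 heM (Finset.mem_filter.1 hdM).2 hed
    exact Finset.disjoint_left.1 hdisj (Finset.mem_filter.1 he).2 (Finset.mem_filter.1 hd).2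
  have hcard : (H.removeVerts {v}).verts.card = H.verts.card - 1 := by
    rw [removeVerts_verts, Finset.sdiff_singleton_eq_erase, Finset.card_erase_of_mem hv]
  have hpos : 0 < H.verts.card := Finset.card_pos.2 ⟨v, hv⟩
  rw [matchPoly_eq_sum_matchings hr hH hu, ← Finset.sum_filter_add_sum_filter_not _
      (fun M => ∃ e ∈ M, v ∈ e), hcover, Finset.sum_biUnion hcover_disj,
    Finset.sum_congr rfl fun e he => sum_matchings_filter_mem hr hH hu (Finset.mem_filter.1 he).1 x,
    Finset.sum_neg_distrib, ← matchings_removeVerts_singleton,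
    matchPoly_eq_sum_matchings hr (hH.removeVerts _) (hu.removeVerts _), Finset.mul_sum,
    neg_add_eq_sub]
  congr 1
  refine Finset.sum_congr rfl fun M hM => ?_
  have hb := mul_card_le_card_verts (hH.removeVerts _) (hu.removeVerts _) hM
  rw [hcard] at hb ⊢
  rw [show H.verts.card - r * M.card = H.verts.card - 1 - r * M.card + 1 by omega, pow_succ]
  ring

def map (σ : α → β) (H : FinHypergraph α) : FinHypergraph β :=
  ⟨H.verts.image σ, H.edges.image (Finset.image σ)⟩

theorem WellFormed.map {H : FinHypergraph α} (hH : H.WellFormed) (σ : α → β) :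
    (H.map σ).WellFormed := by
  intro e he
  obtain ⟨d, hd, rfl⟩ := Finset.mem_image.1 he
  exact Finset.image_subset_image (hH d hd)

theorem WellFormed.injOn_image {H : FinHypergraph α} (hH : H.WellFormed) {σ : α → β}
    (hσ : Set.InjOn σ H.verts) : Set.InjOn (Finset.image σ) H.edges :=
  fun _ hd _ hd' h => (Finset.image_eq_image_iff_of_injOn hσ (hH _ hd) (hH _ hd')).1 h

theorem Uniform.map {H : FinHypergraph α} {r : ℕ} (hu : H.Uniform r) (hH : H.WellFormed)
    {σ : α → β} (hσ : Set.InjOn σ H.verts) : (H.map σ).Uniform r := by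
  intro e he
  obtain ⟨d, hd, rfl⟩ := Finset.mem_image.1 he
  rw [Finset.card_image_of_injOn (hσ.mono (Finset.coe_subset.2 (hH d hd))), hu d hd]

theorem matchings_map {H : FinHypergraph α} (hH : H.WellFormed) {σ : α → β}
    (hσ : Set.InjOn σ H.verts) :
    (H.map σ).matchings = H.matchings.image (Finset.image (Finset.image σ)) := by
  have hdisj : ∀ d ∈ H.edges, ∀ d' ∈ H.edges,
      Disjoint (d.image σ) (d'.image σ) ↔ Disjoint d d' := fun d hd d' hd' =>
    Finset.disjoint_image_iff_of_injOn
      (hσ.mono (Finset.coe_subset.2 (Finset.union_subset (hH d hd) (hH d' hd'))))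
  ext M'
  simp only [Finset.mem_image, mem_matchings]
  constructor
  · rintro ⟨hM'E, hM'⟩
    refine ⟨H.edges.filter (Finset.image σ · ∈ M'), ⟨Finset.filter_subset _ _, ?_⟩, ?_⟩
    · intro d hd d' hd' hne
      obtain ⟨hd, hdM⟩ := Finset.mem_filter.1 hd
      obtain ⟨hd', hd'M⟩ := Finset.mem_filter.1 hd'
      exact (hdisj d hd d' hd').1 (hM' hdM hd'M fun h => hne (hH.injOn_image hσ hd hd' h))
    · ext c
      simp only [Finset.mem_image, Finset.mem_filter]
      constructor
      · rintro ⟨d, ⟨-, hdM⟩, rfl⟩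
        exact hdM
      · intro hc
        obtain ⟨d, hd, rfl⟩ := Finset.mem_image.1 (hM'E hc)
        exact ⟨d, ⟨hd, hc⟩, rfl⟩
  · rintro ⟨M, ⟨hME, hM⟩, rfl⟩
    refine ⟨Finset.image_subset_image hME, ?_⟩
    rw [Finset.coe_image, (hH.injOn_image hσ).mono (Finset.coe_subset.2 hME) |>.pairwise_image]
    exact hM.imp_on fun d hd d' hd' _ h => (hdisj d (hME hd) d' (hME hd')).2 h

theorem matchPoly_map {H : FinHypergraph α} {r : ℕ} (hr : 0 < r) (hH : H.WellFormed)
    (hu : H.Uniform r) {σ : α → β} (hσ : Set.InjOn σ H.verts) (x : ℝ) :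
    (H.map σ).matchPoly r x = H.matchPoly r x := by
  have hinj : ∀ M ∈ H.matchings, Set.InjOn (Finset.image σ) M := fun M hM =>
    (hH.injOn_image hσ).mono (Finset.coe_subset.2 (mem_matchings.1 hM).1)
  rw [matchPoly_eq_sum_matchings hr (hH.map σ) (hu.map hH hσ),
    matchPoly_eq_sum_matchings hr hH hu, matchings_map hH hσ, Finset.sum_image fun M hM M' hM' h =>
      (Finset.image_eq_image_iff_of_injOn (hH.injOn_image hσ) (mem_matchings.1 hM).1
        (mem_matchings.1 hM').1).1 h]
  refine Finset.sum_congr rfl fun M hM => ?_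
  rw [map, Finset.card_image_of_injOn hσ, Finset.card_image_of_injOn (hinj M hM)]

theorem map_removeVerts {H : FinHypergraph α} (hH : H.WellFormed) {σ : α → β}
    (hσ : Set.InjOn σ H.verts) {S : Finset α} (hS : S ⊆ H.verts) :
    (H.map σ).removeVerts (S.image σ) = (H.removeVerts S).map σ := by
  ext1
  · exact (Finset.image_sdiff_of_injOn hσ hS).symm
  · simp only [map, removeVerts_edges, Finset.filter_image]
    refine congrArg _ (Finset.filter_congr fun d hd => ?_)
    exact Finset.disjoint_image_iff_of_injOn
      (hσ.mono (Finset.coe_subset.2 (Finset.union_subset (hH d hd) hS)))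

theorem matchPoly_removeVerts_union_of_inter_eq_singleton {H K : FinHypergraph α} {r : ℕ}
    (hr : 0 < r) (hH : H.WellFormed) (huH : H.Uniform r) (hK : K.WellFormed)
    (huK : K.Uniform r) {w : α} (hw : H.verts ∩ K.verts = {w}) (x : ℝ) :
    ((H ∪ K).removeVerts {w}).matchPoly r x
      = (H.removeVerts {w}).matchPoly r x * (K.removeVerts {w}).matchPoly r x := by
  rw [removeVerts_union, matchPoly_union_of_disjoint hr (hH.removeVerts _) (huH.removeVerts _)
    (hK.removeVerts _) (huK.removeVerts _)]
  refine Finset.disjoint_left.2 fun a ha ha' => (Finset.mem_sdiff.1 ha).2 ?_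
  exact hw ▸ Finset.mem_inter.2 ⟨(Finset.mem_sdiff.1 ha).1, (Finset.mem_sdiff.1 ha').1⟩

theorem sum_matchPoly_union_removeVerts {H K : FinHypergraph α} {r : ℕ} (hr : 0 < r)
    (hH : H.WellFormed) (huH : H.Uniform r) (hK : K.WellFormed) (huK : K.Uniform r) {w : α}
    (hw : H.verts ∩ K.verts = {w}) (x : ℝ) :
    ∑ e ∈ H.edges with w ∈ e, ((H ∪ K).removeVerts e).matchPoly r x
      = (∑ e ∈ H.edges with w ∈ e, (H.removeVerts e).matchPoly r x)
          * (K.removeVerts {w}).matchPoly r x := by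
  have hmem : ∀ {a}, a ∈ H.verts → a ∈ K.verts → a = w := fun ha hb =>
    Finset.mem_singleton.1 (hw ▸ Finset.mem_inter.2 ⟨ha, hb⟩)
  rw [Finset.sum_mul]
  refine Finset.sum_congr rfl fun e he => ?_
  obtain ⟨heH, hwe⟩ := Finset.mem_filter.1 he
  have hKe : K.removeVerts e = K.removeVerts {w} := removeVerts_congr hK fun a ha =>
    ⟨fun hae => Finset.mem_singleton.2 (hmem (hH e heH hae) ha),
      fun haw => Finset.mem_singleton.1 haw ▸ hwe⟩
  rw [removeVerts_union, hKe, matchPoly_union_of_disjoint hr (hH.removeVerts e)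
    (huH.removeVerts e) (hK.removeVerts _) (huK.removeVerts _)]
  refine Finset.disjoint_left.2 fun a ha ha' => ?_
  obtain ⟨haK, haw⟩ := Finset.mem_sdiff.1 ha'
  exact haw (Finset.mem_singleton.2 (hmem (Finset.mem_sdiff.1 ha).1 haK))

theorem matchPoly_union_of_inter_eq_singleton {H K : FinHypergraph α} {r : ℕ} (hr : 2 ≤ r)
    (hH : H.WellFormed) (huH : H.Uniform r) (hK : K.WellFormed) (huK : K.Uniform r) {w : α}
    (hw : H.verts ∩ K.verts = {w}) (x : ℝ) :
    (H ∪ K).matchPoly r x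
      = (H.removeVerts {w}).matchPoly r x * K.matchPoly r x
        + H.matchPoly r x * (K.removeVerts {w}).matchPoly r x
        - x * (H.removeVerts {w}).matchPoly r x * (K.removeVerts {w}).matchPoly r x := by
  have hr0 : 0 < r := by omega
  obtain ⟨hwH, hwK⟩ := Finset.mem_inter.1 (hw ▸ Finset.mem_singleton_self w)
  have hedges : Disjoint (H.edges.filter (w ∈ ·)) (K.edges.filter (w ∈ ·)) := by
    refine Finset.disjoint_left.2 fun e heH heK => ?_
    have hsub : e ⊆ {w} := hw ▸ Finset.subset_inter (hH e (Finset.mem_filter.1 heH).1)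
      (hK e (Finset.mem_filter.1 heK).1)
    have := Finset.card_le_card hsub
    rw [Finset.card_singleton, huH e (Finset.mem_filter.1 heH).1] at this
    omega
  rw [matchPoly_vertex_recurrence hr0 (hH.union hK) (huH.union huK) (Finset.mem_union_left _ hwH),
    matchPoly_removeVerts_union_of_inter_eq_singleton hr0 hH huH hK huK hw, union_edges,
    Finset.filter_union, Finset.sum_union hedges,
    sum_matchPoly_union_removeVerts hr0 hH huH hK huK hw, union_comm H K,
    sum_matchPoly_union_removeVerts hr0 hK huK hH huH (by rw [Finset.inter_comm, hw]),
    matchPoly_vertex_recurrence hr0 hH huH hwH, matchPoly_vertex_recurrence hr0 hK huK hwK]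
  ring

/-- The coalescence `H1 · H2` of the paper; the merged vertex keeps the name `v1`. -/
def coalesce (H1 H2 : FinHypergraph α) (v1 v2 : α) : FinHypergraph α :=
  ⟨H1.verts ∪ H2.verts.erase v2,
    H1.edges ∪ H2.edges.image (fun e => if v2 ∈ e then insert v1 (e.erase v2) else e)⟩

section Coalescence

variable {H1 H2 : FinHypergraph α} {r : ℕ} {v1 v2 : α}

theorem injOn_update_id (hv1 : v1 ∉ H2.verts) :
    Set.InjOn (Function.update id v2 v1) H2.verts := by
  intro a ha b hb h
  simp only [Function.update_apply, id] at h
  split_ifs at h <;> grind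

theorem coalesce_eq_union_map (hv1 : v1 ∈ H1.verts) (hv2 : v2 ∈ H2.verts) :
    coalesce H1 H2 v1 v2 = H1 ∪ H2.map (Function.update id v2 v1) := by
  ext1
  · rw [coalesce, map, union_verts, Finset.image_update_id, if_pos hv2, Finset.union_insert,
      Finset.insert_eq_of_mem (Finset.mem_union_left _ hv1)]
  · exact congrArg (H1.edges ∪ ·)
      (Finset.image_congr fun e _ => (Finset.image_update_id v2 v1 e).symm)

theorem inter_verts_map_update (hdisj : Disjoint H1.verts H2.verts) (hv1 : v1 ∈ H1.verts)
    (hv2 : v2 ∈ H2.verts) : H1.verts ∩ (H2.map (Function.update id v2 v1)).verts = {v1} := by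
  rw [map, Finset.image_update_id, if_pos hv2, Finset.inter_insert_of_mem hv1,
    Finset.disjoint_iff_inter_eq_empty.1 (hdisj.mono_right (Finset.erase_subset _ _)),
    Finset.insert_empty]

theorem map_update_removeVerts (hH2 : H2.WellFormed) (hv1 : v1 ∉ H2.verts)
    (hv2 : v2 ∈ H2.verts) :
    (H2.map (Function.update id v2 v1)).removeVerts {v1}
      = (H2.removeVerts {v2}).map (Function.update id v2 v1) := by
  rw [← map_removeVerts hH2 (injOn_update_id hv1) (Finset.singleton_subset_iff.2 hv2),
    Finset.image_singleton, Function.update_self]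

theorem WellFormed.coalesce (hH1 : H1.WellFormed) (hH2 : H2.WellFormed) (hv1 : v1 ∈ H1.verts)
    (hv2 : v2 ∈ H2.verts) : (coalesce H1 H2 v1 v2).WellFormed :=
  coalesce_eq_union_map hv1 hv2 ▸ hH1.union (hH2.map _)

theorem Uniform.coalesce (hu1 : H1.Uniform r) (hu2 : H2.Uniform r) (hH2 : H2.WellFormed)
    (hdisj : Disjoint H1.verts H2.verts) (hv1 : v1 ∈ H1.verts) (hv2 : v2 ∈ H2.verts) :
    (coalesce H1 H2 v1 v2).Uniform r :=
  coalesce_eq_union_map hv1 hv2 ▸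
    hu1.union (hu2.map hH2 (injOn_update_id (Finset.disjoint_left.1 hdisj hv1)))

theorem matchPoly_coalesce (hr : 2 ≤ r) (hH1 : H1.WellFormed) (hu1 : H1.Uniform r)
    (hH2 : H2.WellFormed) (hu2 : H2.Uniform r) (hdisj : Disjoint H1.verts H2.verts)
    (hv1 : v1 ∈ H1.verts) (hv2 : v2 ∈ H2.verts) (x : ℝ) :
    (coalesce H1 H2 v1 v2).matchPoly r x
      = (H1.removeVerts {v1}).matchPoly r x * H2.matchPoly r x
        + H1.matchPoly r x * (H2.removeVerts {v2}).matchPoly r x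
        - x * (H1.removeVerts {v1}).matchPoly r x * (H2.removeVerts {v2}).matchPoly r x := by
  have hρ := injOn_update_id (v2 := v2) (Finset.disjoint_left.1 hdisj hv1)
  rw [coalesce_eq_union_map hv1 hv2, matchPoly_union_of_inter_eq_singleton hr hH1 hu1
      (hH2.map _) (hu2.map hH2 hρ) (inter_verts_map_update hdisj hv1 hv2),
    map_update_removeVerts hH2 (Finset.disjoint_left.1 hdisj hv1) hv2,
    matchPoly_map (by omega) hH2 hu2 hρ, matchPoly_map (by omega) (hH2.removeVerts _)
      (hu2.removeVerts _) (hρ.mono (Finset.coe_subset.2 Finset.sdiff_subset))]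

theorem matchPoly_coalesce_removeVerts (hr : 0 < r) (hH1 : H1.WellFormed) (hu1 : H1.Uniform r)
    (hH2 : H2.WellFormed) (hu2 : H2.Uniform r) (hdisj : Disjoint H1.verts H2.verts)
    (hv1 : v1 ∈ H1.verts) (hv2 : v2 ∈ H2.verts) (x : ℝ) :
    ((coalesce H1 H2 v1 v2).removeVerts {v1}).matchPoly r x
      = (H1.removeVerts {v1}).matchPoly r x * (H2.removeVerts {v2}).matchPoly r x := by
  have hρ := injOn_update_id (v2 := v2) (Finset.disjoint_left.1 hdisj hv1)
  rw [coalesce_eq_union_map hv1 hv2, matchPoly_removeVerts_union_of_inter_eq_singleton hr hH1 hu1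
      (hH2.map _) (hu2.map hH2 hρ) (inter_verts_map_update hdisj hv1 hv2),
    map_update_removeVerts hH2 (Finset.disjoint_left.1 hdisj hv1) hv2,
    matchPoly_map hr (hH2.removeVerts _) (hu2.removeVerts _)
      (hρ.mono (Finset.coe_subset.2 Finset.sdiff_subset))]

end Coalescence

theorem matchPoly_add_edge {H : FinHypergraph α} {r : ℕ} (hr : 0 < r) (hH : H.WellFormed)
    (hu : H.Uniform r) {e N : Finset α} (hN : Disjoint N H.verts) (hNe : N ⊆ e)
    (he : e ⊆ H.verts ∪ N) (hcard : e.card = r) (heE : e ∉ H.edges) (x : ℝ) :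
    (⟨H.verts ∪ N, insert e H.edges⟩ : FinHypergraph α).matchPoly r x
      = x ^ N.card * H.matchPoly r x - (H.removeVerts e).matchPoly r x := by
  set I : FinHypergraph α := ⟨N, ∅⟩
  have hI : I.WellFormed := fun _ h => absurd h (Finset.notMem_empty _)
  have huI : I.Uniform r := fun _ h => absurd h (Finset.notMem_empty _)
  have hdel : (H ∪ I).removeVerts e = H.removeVerts e := by
    ext1
    · rw [removeVerts_verts, union_verts, Finset.union_sdiff_distrib,
        Finset.sdiff_eq_empty_iff_subset.2 hNe, Finset.union_empty, removeVerts_verts]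
    · rw [removeVerts_edges, union_edges, Finset.union_empty, removeVerts_edges]
  have h := matchPoly_insert_edge hr (hH.union hI) (hu.union huI) he hcard
    (by rwa [union_edges, Finset.union_empty]) x
  rw [hdel, matchPoly_union_of_disjoint hr hH hu hI huI hN.symm, matchPoly_edgeless] at h
  rw [mul_comm, ← h]
  congr 2
  exact congrArg (insert e) (Finset.union_empty H.edges).symm

theorem matchPoly_add_pendant_edge {H : FinHypergraph α} {r : ℕ} (hH : H.WellFormed)
    (hu : H.Uniform r) {v : α} (hv : v ∈ H.verts) {g : Finset α} (hg : Disjoint g H.verts)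
    (hg_ne : g.Nonempty) (hcard : g.card + 1 = r) (x : ℝ) :
    (⟨H.verts ∪ g, insert (insert v g) H.edges⟩ : FinHypergraph α).matchPoly r x
      = x ^ g.card * H.matchPoly r x - (H.removeVerts {v}).matchPoly r x := by
  obtain ⟨a, ha⟩ := hg_ne
  have hvg' : v ∉ g := fun h => Finset.disjoint_left.1 hg h hv
  have hvg : ∀ b ∈ H.verts, b ∈ insert v g ↔ b ∈ ({v} : Finset α) := fun b hb => by
    simp [Finset.disjoint_right.1 hg hb]
  rw [matchPoly_add_edge (by omega) hH hu hg (Finset.subset_insert _ _)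
    (Finset.insert_subset (Finset.mem_union_left _ hv) Finset.subset_union_right)
    (by rw [Finset.card_insert_of_notMem hvg', hcard])
    fun he => Finset.disjoint_left.1 hg ha (hH _ he (Finset.mem_insert_of_mem ha)),
    removeVerts_congr hH hvg]

theorem matchPoly_join_by_edge {H1 H2 : FinHypergraph α} {r : ℕ} (hH1 : H1.WellFormed)
    (hu1 : H1.Uniform r) (hH2 : H2.WellFormed) (hu2 : H2.Uniform r)
    (hdisj : Disjoint H1.verts H2.verts) {v1 v2 : α} (hv1 : v1 ∈ H1.verts)
    (hv2 : v2 ∈ H2.verts) {f : Finset α} (hf : Disjoint f (H1.verts ∪ H2.verts))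
    (hcard : f.card + 2 = r) (x : ℝ) :
    (⟨H1.verts ∪ H2.verts ∪ f, insert (insert v1 (insert v2 f)) (H1.edges ∪ H2.edges)⟩ :
        FinHypergraph α).matchPoly r x
      = x ^ f.card * (H1.matchPoly r x * H2.matchPoly r x)
        - (H1.removeVerts {v1}).matchPoly r x * (H2.removeVerts {v2}).matchPoly r x := by
  have hv1' : v1 ∉ H2.verts := Finset.disjoint_left.1 hdisj hv1
  have hv2' : v2 ∉ H1.verts := Finset.disjoint_right.1 hdisj hv2
  have hecard : (insert v1 (insert v2 f)).card = r := by
    rw [Finset.card_insert_of_notMem, Finset.card_insert_of_notMem, ← hcard]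
    · exact Finset.disjoint_right.1 hf (Finset.mem_union_right _ hv2)
    · simp [Finset.disjoint_right.1 hf (Finset.mem_union_left _ hv1),
        ne_of_mem_of_not_mem hv1 hv2']
  have hcong1 : ∀ a ∈ H1.verts, a ∈ insert v1 (insert v2 f) ↔ a ∈ ({v1} : Finset α) :=
    fun a ha => by
      simp [ne_of_mem_of_not_mem ha hv2',
        Finset.disjoint_right.1 hf (Finset.mem_union_left _ ha)]
  have hcong2 : ∀ a ∈ H2.verts, a ∈ insert v1 (insert v2 f) ↔ a ∈ ({v2} : Finset α) :=
    fun a ha => by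
      simp [ne_of_mem_of_not_mem ha hv1',
        Finset.disjoint_right.1 hf (Finset.mem_union_right _ ha)]
  have he : insert v1 (insert v2 f) ∉ (H1 ∪ H2).edges := by
    rintro he
    rcases Finset.mem_union.1 he with he | he
    · exact hv2' (hH1 _ he (by simp))
    · exact hv1' (hH2 _ he (by simp))
  have hr : 0 < r := by omega
  refine (matchPoly_add_edge hr (hH1.union hH2) (hu1.union hu2) hf
      ((Finset.subset_insert _ _).trans (Finset.subset_insert _ _))
      (Finset.insert_subset (by simp [hv1])
        (Finset.insert_subset (by simp [hv2]) Finset.subset_union_right)) hecard he x).trans ?_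
  rw [matchPoly_union_of_disjoint hr hH1 hu1 hH2 hu2 hdisj, removeVerts_union,
    removeVerts_congr hH1 hcong1, removeVerts_congr hH2 hcong2,
    matchPoly_union_of_disjoint hr (hH1.removeVerts _) (hu1.removeVerts _) (hH2.removeVerts _)
      (hu2.removeVerts _) (hdisj.mono Finset.sdiff_subset Finset.sdiff_subset)]

end FinHypergraph

/-- Let `H1`, `H2` be vertex-disjoint `r`-uniform supertrees (`r ≥ 2`)
with distinguished vertices `v1 ∈ V(H1)`, `v2 ∈ V(H2)`. Let `T` be obtained from
`H1 ∪ H2` by adding a new edge consisting of `v1`, `v2` and `r−2` new vertices, and let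
`T'` be obtained from `H1 ∪ H2` by identifying `v1` and `v2` (coalescence) and adding a
pendant edge (the identified vertex together with `r−1` new vertices) there. Then
`φ(T,x) − φ(T',x)
  = x^(r−2)·( x·φ(H2−v2,x) − φ(H2,x) )·Σ_{e ∈ E_{v1}(H1)} φ(H1−V(e),x)`. -/
theorem matchPoly_edge_release {α : Type*} (r : ℕ) (hr : 2 ≤ r)
    (H1 H2 : FinHypergraph α) (h1 : H1.IsSupertree r) (h2 : H2.IsSupertree r)
    (hdisj : Disjoint H1.verts H2.verts)
    (v1 v2 : α) (hv1 : v1 ∈ H1.verts) (hv2 : v2 ∈ H2.verts)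
    (f g : Finset α) (hfcard : f.card = r - 2) (hgcard : g.card = r - 1)
    (hf : Disjoint f (H1.verts ∪ H2.verts)) (hg : Disjoint g (H1.verts ∪ H2.verts))
    (T T' : FinHypergraph α)
    (hT : T = ⟨H1.verts ∪ H2.verts ∪ f,
      insert (insert v1 (insert v2 f)) (H1.edges ∪ H2.edges)⟩)
    (hT' : T' = ⟨(H1.verts ∪ H2.verts.erase v2) ∪ g,
      insert (insert v1 g)
        (H1.edges ∪ H2.edges.image (fun e => if v2 ∈ e then insert v1 (e.erase v2) else e))⟩) :
    ∀ x : ℝ, T.matchPoly r x - T'.matchPoly r x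
      = x ^ (r - 2) *
          (x * (H2.removeVerts {v2}).matchPoly r x - H2.matchPoly r x) *
          ∑ e ∈ H1.edges.filter (fun e => v1 ∈ e), (H1.removeVerts e).matchPoly r x := by
  intro x
  obtain ⟨hH1, hu1, -, -⟩ := h1
  obtain ⟨hH2, hu2, -, -⟩ := h2
  have hT_eq : T.matchPoly r x = x ^ (r - 2) * (H1.matchPoly r x * H2.matchPoly r x)
      - (H1.removeVerts {v1}).matchPoly r x * (H2.removeVerts {v2}).matchPoly r x := by
    rw [hT, ← hfcard]
    exact matchPoly_join_by_edge hH1 hu1 hH2 hu2 hdisj hv1 hv2 hf (by omega) x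
  have hT'_eq : T'.matchPoly r x = x ^ (r - 1) * (coalesce H1 H2 v1 v2).matchPoly r x
      - (H1.removeVerts {v1}).matchPoly r x * (H2.removeVerts {v2}).matchPoly r x := by
    rw [hT', ← hgcard,
      ← matchPoly_coalesce_removeVerts (by omega) hH1 hu1 hH2 hu2 hdisj hv1 hv2]
    exact matchPoly_add_pendant_edge (hH1.coalesce hH2 hv1 hv2)
      (hu1.coalesce hu2 hH2 hdisj hv1 hv2) (Finset.mem_union_left _ hv1)
      (hg.mono_right (Finset.union_subset_union_right (Finset.erase_subset _ _)))
      (Finset.card_pos.1 (by omega)) (by omega) x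
  have hH1_eq := matchPoly_vertex_recurrence (by omega) hH1 hu1 hv1 x
  have hpow : x ^ (r - 1) = x * x ^ (r - 2) := by rw [← pow_succ']; congr 1; omega
  rw [hT_eq, hT'_eq, matchPoly_coalesce hr hH1 hu1 hH2 hu2 hdisj hv1 hv2, hpow]
  linear_combination x ^ (r - 2) * (H2.matchPoly r x - x * (H2.removeVerts {v2}).matchPoly r x)
    * hH1_eq
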